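/- For all real numbers α, β with α + β ≠ 0 and every complex number z, φ((α+β)z) = (1/(α+β)) · [β · e^{αz} · φ(βz) + α · φ(αz)], where φ(w) = Σ_{k=0}^∞ w^k/(k+1)!. -/

import Mathlib

/-! Since `w * φ w = exp w - 1`, multiplying the identity by `(α + β) z` turns it into
`exp ((α + β) z) - 1 = exp (α z) (exp (β z) - 1) + (exp (α z) - 1)`, i.e. the addition law of `exp`.
The cleared form `(a + b) φ((a + b) z) = b exp(a z) φ(b z) + a φ(a z)` holds for all complex
`a, b, z`, and at `z = 0` it reads `a + b = b + a`. -/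

open Complex

noncomputable def phi (w : ℂ) : ℂ := ∑' k : ℕ, w ^ k / (Nat.factorial (k + 1) : ℂ)

theorem phi_zero : phi 0 = 1 := by
  rw [phi, tsum_eq_single 0 fun n hn => by simp [zero_pow hn]]
  simp

theorem mul_phi (w : ℂ) : w * phi w = exp w - 1 := by
  have hexp : exp w = ∑' n : ℕ, w ^ n / (Nat.factorial n : ℂ) := by
    rw [exp_eq_exp_ℂ, NormedSpace.exp_eq_tsum_div]
  rw [hexp, (NormedSpace.expSeries_div_summable w).tsum_eq_zero_add, phi, ← tsum_mul_left]
  simp only [pow_zero, Nat.factorial_zero, Nat.cast_one, div_one, add_sub_cancel_left, pow_succ]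
  congr 1 with k
  ring

theorem add_mul_phi_add_mul (a b z : ℂ) :
    (a + b) * phi ((a + b) * z) = b * exp (a * z) * phi (b * z) + a * phi (a * z) := by
  rcases eq_or_ne z 0 with rfl | hz
  · simp [phi_zero, add_comm]
  refine mul_left_cancel₀ hz ?_
  calc z * ((a + b) * phi ((a + b) * z)) = exp ((a + b) * z) - 1 := by
        rw [← mul_phi]; ring
    _ = exp (a * z) * (exp (b * z) - 1) + (exp (a * z) - 1) := by
        rw [add_mul, exp_add]; ring
    _ = z * (b * exp (a * z) * phi (b * z) + a * phi (a * z)) := by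
        rw [← mul_phi, ← mul_phi]; ring

/-- For real `α β` with `α+β ≠ 0` and every complex `z`,
`φ((α+β)z) = (1/(α+β))·[β·e^{αz}·φ(βz) + α·φ(αz)]`. -/
theorem phi_general_recurrence (α β : ℝ) (hαβ : α + β ≠ 0) (z : ℂ) :
    (∑' k : ℕ, (((α : ℂ) + β) * z) ^ k / (Nat.factorial (k + 1) : ℂ)) =
      (1 / ((α : ℂ) + β)) *
        ((β : ℂ) * Complex.exp ((α : ℂ) * z) *
            (∑' k : ℕ, ((β : ℂ) * z) ^ k / (Nat.factorial (k + 1) : ℂ)) +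
          (α : ℂ) * (∑' k : ℕ, ((α : ℂ) * z) ^ k / (Nat.factorial (k + 1) : ℂ))) := by
  have hs : (α : ℂ) + β ≠ 0 := by exact_mod_cast hαβ
  change phi _ = 1 / _ * (_ * _ * phi _ + _ * phi _)
  rw [← add_mul_phi_add_mul, one_div, inv_mul_cancel_left₀ hs]
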